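/- Let G be a locally compact group with left Haar measure λ_G, K a compact subgroup with normalized Haar measure, and μ the G-invariant measure on G/K satisfying the Weyl integration formula. Let U be a K-bi-invariant symmetric neighbourhood of the identity in G and V a K-bi-invariant symmetric subset of G. Then the Delsarte constants coincide: C_{G/K}(U, V) := sup over Φ ∈ F_{G/K}(U, V) of ∫_{G/K} Φ(K, yK) dμ(yK) equals C_G^K(U, V) := sup over φ ∈ F_G^K(U, V) of ∫_G φ(g) dλ_G(g). -/

import Mathlib

open scoped BigOperators ComplexOrder Pointwise
open MeasureTheory

/-- A real-valued function on a group is positive definite. -/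
def IsPosDefFnR {G : Type*} [Group G] (φ : G → ℝ) : Prop :=
  ∀ (n : ℕ) (c : Fin n → ℂ) (g : Fin n → G),
    0 ≤ ∑ i, ∑ j, c i * (starRingEnd ℂ) (c j) * (φ ((g i)⁻¹ * g j) : ℂ)

/-- `K`-bi-invariance of a real-valued function on `G`. -/
def IsBiInvariantR {G : Type*} [Group G] (K : Subgroup G) (φ : G → ℝ) : Prop :=
  ∀ (k k' : K) (g : G), φ ((k : G) * g * (k' : G)) = φ g

/-- A real-valued kernel on `G/K × G/K` is positive definite. -/
def IsPosDefKernelR {G : Type*} [Group G] (K : Subgroup G)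
    (Φ : G ⧸ K → G ⧸ K → ℝ) : Prop :=
  ∀ (n : ℕ) (a : Fin n → ℂ) (x : Fin n → G),
    0 ≤ ∑ i, ∑ j, a i * (starRingEnd ℂ) (a j) *
      (Φ (QuotientGroup.mk (x i)) (QuotientGroup.mk (x j)) : ℂ)

/-- `G`-invariance of a real-valued kernel on `G/K × G/K`. -/
def IsGInvariantKernel {G : Type*} [Group G] (K : Subgroup G)
    (Φ : G ⧸ K → G ⧸ K → ℝ) : Prop :=
  ∀ g x y : G, Φ (QuotientGroup.mk (g * x)) (QuotientGroup.mk (g * y)) =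
    Φ (QuotientGroup.mk x) (QuotientGroup.mk y)

/-- The admissible class `F_G^K(U, V)` of the Delsarte problem for
`K`-bi-invariant functions on `G`. -/
def FdelFun (G : Type*) [Group G] [TopologicalSpace G] (K : Subgroup G)
    (U V : Set G) : Set (G → ℝ) :=
  {φ | Continuous φ ∧ IsPosDefFnR φ ∧ IsBiInvariantR K φ ∧ φ 1 = 1 ∧
    tsupport (fun g => max (φ g) 0) ⊆ U ∧ tsupport (fun g => max (-(φ g)) 0) ⊆ V}

/-- The admissible class `F_{G/K}(U, V)` of the Delsarte problem for
`G`-invariant kernels on `G/K`. -/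
def FdelKer (G : Type*) [Group G] [TopologicalSpace G] (K : Subgroup G)
    (U V : Set G) : Set (G ⧸ K → G ⧸ K → ℝ) :=
  {Φ | Continuous (fun p : (G ⧸ K) × (G ⧸ K) => Φ p.1 p.2) ∧
    IsPosDefKernelR K Φ ∧ IsGInvariantKernel K Φ ∧
    (∀ x : G, Φ (QuotientGroup.mk x) (QuotientGroup.mk x) = 1) ∧
    tsupport (fun x : G => max (Φ (QuotientGroup.mk (1 : G)) (QuotientGroup.mk x)) 0) ⊆ U ∧
    tsupport (fun x : G => max (-(Φ (QuotientGroup.mk (1 : G)) (QuotientGroup.mk x))) 0) ⊆ V}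

/-!
The maps `Φ ↦ (g ↦ Φ(K, gK))` and `φ ↦ ((xK, yK) ↦ φ(x⁻¹y))` send each admissible class into the
other, so it suffices that they preserve the objective, i.e. that
`∫_G Ψ(gK) dλ_G = ∫_{G/K} Ψ dμ` for every continuous `Ψ` on `G/K` (with both sides `0` when not
integrable). For `Ψ ∈ C_c(G/K)` this is Weyl's formula, which also shows that `μ` charges nonempty
open sets. Since `μ` is not assumed to be Radon, the general case goes through lower integrals of
`Ψ ≥ 0`: if `supp Ψ` is σ-compact, `Ψ` is the increasing limit of the functions `Ψ ηₙ` with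
`ηₙ ∈ C_c(G/K)`; otherwise `supp Ψ` meets uncountably many cosets of an open σ-compact subgroup
`H ⊇ K`, and both lower integrals are infinite.
-/

open Set Function Filter Topology QuotientGroup
open scoped ENNReal NNReal CompactlySupported

theorem IsSigmaCompact.exists_monotone_eventually_eq_one {X : Type*} [TopologicalSpace X]
    [RegularSpace X] [LocallyCompactSpace X] {S : Set X} (hS : IsSigmaCompact S) :
    ∃ η : ℕ → C_c(X, ℝ), Monotone η ∧ (∀ n x, 0 ≤ η n x ∧ η n x ≤ 1) ∧
      ∀ x ∈ S, ∀ᶠ n in atTop, η n x = 1 := by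
  obtain ⟨C, hC, rfl⟩ := hS
  have hχ : ∀ n, ∃ χ : C_c(X, ℝ), EqOn χ 1 (C n) ∧ ∀ x, χ x ∈ Icc (0 : ℝ) 1 := fun n => by
    obtain ⟨χ, hχC, -, hχc, hχI⟩ :=
      exists_continuous_one_zero_of_isCompact (hC n) isClosed_empty (disjoint_empty _)
    exact ⟨⟨χ, hχc⟩, hχC, hχI⟩
  choose χ hχC hχI using hχ
  have hle : ∀ n x, partialSups χ n x ≤ 1 := fun n =>
    (partialSups_iff_forall (fun η : C_c(X, ℝ) => ∀ x, η x ≤ 1) (by simp [forall_and])).2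
      fun m _ x => (hχI m x).2
  refine ⟨partialSups χ, (partialSups χ).monotone,
    fun n x => ⟨(hχI n x).1.trans (le_partialSups χ n x), hle n x⟩, fun x hx => ?_⟩
  obtain ⟨m, hm⟩ := mem_iUnion.1 hx
  filter_upwards [eventually_ge_atTop m] with n hn
  exact (hle n x).antisymm (by simpa [hχC m hm] using le_partialSups_of_le χ hn x)

theorem HasCompactSupport.comp_isProperMap {X Y E : Type*} [TopologicalSpace X]
    [TopologicalSpace Y] [Zero E] {f : Y → E} (hf : HasCompactSupport f) {p : X → Y}
    (hp : IsProperMap p) : HasCompactSupport (f ∘ p) :=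
  (hp.isCompact_preimage hf).of_isClosed_subset (isClosed_tsupport _)
    (tsupport_comp_subset_preimage f hp.continuous)

/-- The finite measure `m.withDensity f` charges only countably many of the disjoint fibres of `p`,
and it charges every fibre meeting `support f`, which is open. -/
theorem exists_isSigmaCompact_superset_support_of_lintegral_ne_top {X Y : Type*}
    [TopologicalSpace X] [MeasurableSpace X] [OpensMeasurableSpace X] {m : Measure X}
    [m.IsOpenPosMeasure] {p : X → Y} (hp_open : ∀ y, IsOpen (p ⁻¹' {y}))
    (hp_sc : ∀ y, IsSigmaCompact (p ⁻¹' {y})) {f : X → ℝ≥0∞} (hf : Continuous f)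
    (hfm : ∫⁻ x, f x ∂m ≠ ∞) : ∃ S, IsSigmaCompact S ∧ support f ⊆ S := by
  set ν := m.withDensity f
  have hfin : ν (⋃ y, p ⁻¹' {y}) ≠ ∞ := by
    refine ne_top_of_le_ne_top ?_ (measure_mono (subset_univ _))
    rwa [withDensity_apply _ MeasurableSet.univ, Measure.restrict_univ]
  have hcount := Measure.countable_meas_pos_of_disjoint_of_meas_iUnion_ne_top ν
    (fun y => (hp_open y).measurableSet) (pairwise_disjoint_fiber p) hfin
  refine ⟨⋃ y ∈ {y | 0 < ν (p ⁻¹' {y})}, p ⁻¹' {y},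
    isSigmaCompact_biUnion hcount fun y _ => hp_sc y, fun x hx => mem_biUnion (x := p x) ?_ rfl⟩
  show 0 < ν (p ⁻¹' {p x})
  rw [withDensity_apply _ (hp_open _).measurableSet, setLIntegral_pos_iff hf.measurable]
  exact (hf.isOpen_support.inter (hp_open _)).measure_pos m ⟨x, hx, rfl⟩

section TopologicalGroup

variable {G : Type*} [Group G] [TopologicalSpace G] [IsTopologicalGroup G]

theorem exists_isOpen_isSigmaCompact_subgroup_superset [WeaklyLocallyCompactSpace G]
    {K : Set G} (hK : IsCompact K) :
    ∃ H : Subgroup G, K ⊆ H ∧ IsOpen (H : Set G) ∧ IsSigmaCompact (H : Set G) := by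
  obtain ⟨C, hCc, hC1⟩ := exists_compact_mem_nhds (1 : G)
  set T := (C ∪ K) ∪ (C ∪ K)⁻¹
  have hTc : IsCompact T := (hCc.union hK).union (hCc.union hK).inv
  have hTinv : T⁻¹ = T := by simp only [T, union_inv, inv_inv, union_comm]
  let H : Subgroup G :=
    { carrier := ⋃ n : ℕ, T ^ n
      mul_mem' := by
        simp only [mem_iUnion]
        rintro a b ⟨m, ha⟩ ⟨n, hb⟩
        exact ⟨m + n, pow_add T m n ▸ mul_mem_mul ha hb⟩
      one_mem' := mem_iUnion.2 ⟨0, by simp⟩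
      inv_mem' := by
        simp only [mem_iUnion]
        rintro a ⟨n, ha⟩
        exact ⟨n, by rwa [← hTinv, inv_pow, Set.mem_inv, inv_inv]⟩ }
  have hTH : T ⊆ H := fun x hx => mem_iUnion.2 ⟨1, by simpa using hx⟩
  refine ⟨H, fun x hx => hTH (Or.inl (Or.inr hx)), ?_, ?_⟩
  · exact Subgroup.isOpen_of_mem_nhds H (mem_of_superset hC1 fun x hx => hTH (Or.inl (Or.inl hx)))
  · refine isSigmaCompact_iUnion_of_isCompact _ fun n => ?_
    induction n with
    | zero => simp
    | succ n ih => rw [pow_succ]; exact ih.mul hTc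

theorem QuotientGroup.isProperMap_mk (K : Subgroup G) [CompactSpace K] :
    IsProperMap (mk : G → G ⧸ K) := by
  have hK : IsCompact (K : Set G) := isCompact_iff_compactSpace.2 ‹_›
  refine isProperMap_iff_isClosedMap_and_compact_fibers.2
    ⟨continuous_mk, isClosedMap_coe hK, fun y => ?_⟩
  obtain ⟨g, rfl⟩ := mk_surjective y
  rw [← image_singleton, preimage_image_mk_eq_mul]
  exact isCompact_singleton.mul hK

instance [T2Space G] (K : Subgroup G) [CompactSpace K] : IsClosed (K : Set G) :=
  (isCompact_iff_compactSpace.2 ‹_›).isClosed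

theorem QuotientGroup.isOpen_isSigmaCompact_preimage_mk_singleton {H : Subgroup G}
    (hHo : IsOpen (H : Set G)) (hHs : IsSigmaCompact (H : Set G)) (q : G ⧸ H) :
    IsOpen (mk ⁻¹' {q} : Set G) ∧ IsSigmaCompact (mk ⁻¹' {q} : Set G) := by
  obtain ⟨g, rfl⟩ := mk_surjective q
  rw [← image_singleton, preimage_image_mk_eq_mul]
  exact ⟨hHo.mul_left, singleton_mul (t := (H : Set G)) ▸ hHs.image (continuous_const_mul g)⟩

theorem Subgroup.isOpen_isSigmaCompact_preimage_quotientMapOfLE_singleton {K H : Subgroup G}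
    (hKH : K ≤ H) (hHo : IsOpen (H : Set G)) (hHs : IsSigmaCompact (H : Set G)) (q : G ⧸ H) :
    IsOpen (quotientMapOfLE hKH ⁻¹' {q}) ∧ IsSigmaCompact (quotientMapOfLE hKH ⁻¹' {q}) := by
  have hmk : (QuotientGroup.mk : G → G ⧸ K) ⁻¹' (quotientMapOfLE hKH ⁻¹' {q}) =
      (QuotientGroup.mk : G → G ⧸ H) ⁻¹' {q} := rfl
  obtain ⟨ho, hs⟩ := isOpen_isSigmaCompact_preimage_mk_singleton hHo hHs q
  refine ⟨(isQuotientMap_mk K).isOpen_preimage.1 (hmk ▸ ho), ?_⟩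
  rw [← image_preimage_eq (quotientMapOfLE hKH ⁻¹' {q}) mk_surjective, hmk]
  exact hs.image continuous_mk

end TopologicalGroup

def WeylIntegrationFormula {G : Type*} [Group G] [TopologicalSpace G] [MeasurableSpace G]
    (K : Subgroup G) (lamG : Measure G) (lamK : Measure K) [MeasurableSpace (G ⧸ K)]
    (μ : Measure (G ⧸ K)) : Prop :=
  ∀ f : G → ℂ, Continuous f → HasCompactSupport f →
    ∀ F : G ⧸ K → ℂ, (∀ g : G, F (mk g) = ∫ k : K, f (g * (k : G)) ∂lamK) →
      ∫ g, f g ∂lamG = ∫ x, F x ∂μ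

section Quotient

variable {G : Type*} [Group G] [TopologicalSpace G] [IsTopologicalGroup G] [MeasurableSpace G]
  {K : Subgroup G} [CompactSpace K] {lamG : Measure G}

theorem integrable_comp_mk_of_hasCompactSupport [OpensMeasurableSpace G]
    [IsFiniteMeasureOnCompacts lamG] {F : G ⧸ K → ℝ} (hc : Continuous F)
    (hcs : HasCompactSupport F) : Integrable (fun g => F (mk g)) lamG :=
  (hc.comp continuous_mk).integrable_of_hasCompactSupport
    (hcs.comp_isProperMap (isProperMap_mk K))

namespace WeylIntegrationFormula

variable {lamK : Measure K} [MeasurableSpace (G ⧸ K)] {μ : Measure (G ⧸ K)}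
  (hW : WeylIntegrationFormula K lamG lamK μ)
include hW

theorem integral_comp_mk_of_hasCompactSupport [IsProbabilityMeasure lamK] {F : G ⧸ K → ℝ}
    (hc : Continuous F) (hcs : HasCompactSupport F) : ∫ g, F (mk g) ∂lamG = ∫ y, F y ∂μ := by
  have h := hW (fun g => (F (mk g) : ℂ)) (by fun_prop)
    ((hcs.comp_isProperMap (isProperMap_mk K)).comp_left Complex.ofReal_zero) (fun y => (F y : ℂ))
    (fun g => by simp [mk_mul_of_mem g (SetLike.coe_mem _)])
  rwa [integral_complex_ofReal, integral_complex_ofReal, Complex.ofReal_inj] at h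

theorem integrable_of_hasCompactSupport [IsProbabilityMeasure lamK] [BorelSpace G]
    [lamG.IsHaarMeasure] [OpensMeasurableSpace (G ⧸ K)] {F : G ⧸ K → ℝ} (hc : Continuous F)
    (hcs : HasCompactSupport F) : Integrable F μ := by
  by_contra hF
  have hF0 : F ≠ 0 := fun h => hF (h ▸ integrable_zero ..)
  obtain ⟨g, hg⟩ : ∃ g, F (mk g) ≠ 0 := by
    contrapose! hF0
    exact funext fun y => induction_on y hF0
  have hpos := integral_pos_of_integrable_nonneg_nonzero (f := fun g => ‖F (mk g)‖)
    (hc.comp continuous_mk).norm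
    (integrable_comp_mk_of_hasCompactSupport (lamG := lamG) hc.norm hcs.norm)
    (fun _ => norm_nonneg _) (norm_ne_zero_iff.2 hg)
  rw [hW.integral_comp_mk_of_hasCompactSupport hc.norm hcs.norm,
    integral_undef (mt (integrable_norm_iff hc.aestronglyMeasurable).1 hF)] at hpos
  exact hpos.false

theorem isOpenPosMeasure [IsProbabilityMeasure lamK] [LocallyCompactSpace G] [T2Space G]
    [BorelSpace G] [lamG.IsHaarMeasure] [OpensMeasurableSpace (G ⧸ K)] : μ.IsOpenPosMeasure := by
  refine ⟨fun O hO ⟨y, hy⟩ hO0 => ?_⟩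
  obtain ⟨g, rfl⟩ := mk_surjective y
  obtain ⟨F, hF1, hF0, hFcs, hFI⟩ := exists_continuous_one_zero_of_isCompact
    (isCompact_singleton (x := (g : G ⧸ K))) hO.isClosed_compl
    (disjoint_compl_right_iff_subset.2 (singleton_subset_iff.2 hy))
  have hpos := integral_pos_of_integrable_nonneg_nonzero (f := fun g => F (mk g)) (x := g)
    (F.continuous.comp continuous_mk)
    (integrable_comp_mk_of_hasCompactSupport (lamG := lamG) F.continuous hFcs)
    (fun _ => (hFI _).1) (by simp [hF1 rfl])
  have hae : F =ᵐ[μ] 0 := by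
    filter_upwards [measure_eq_zero_iff_ae_notMem.1 hO0] with y hy using hF0 hy
  rw [hW.integral_comp_mk_of_hasCompactSupport F.continuous hFcs, integral_eq_zero_of_ae hae]
    at hpos
  exact hpos.false

theorem lintegral_comp_mk_of_hasCompactSupport [IsProbabilityMeasure lamK] [BorelSpace G]
    [lamG.IsHaarMeasure] [OpensMeasurableSpace (G ⧸ K)] {F : G ⧸ K → ℝ} (hc : Continuous F)
    (hcs : HasCompactSupport F) (hF : 0 ≤ F) :
    ∫⁻ g, ENNReal.ofReal (F (mk g)) ∂lamG = ∫⁻ y, ENNReal.ofReal (F y) ∂μ := by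
  rw [← ofReal_integral_eq_lintegral_ofReal
      (integrable_comp_mk_of_hasCompactSupport (lamG := lamG) hc hcs)
      (Eventually.of_forall fun _ => hF _),
    ← ofReal_integral_eq_lintegral_ofReal (hW.integrable_of_hasCompactSupport hc hcs)
      (Eventually.of_forall hF),
    hW.integral_comp_mk_of_hasCompactSupport hc hcs]

theorem lintegral_comp_mk_of_isSigmaCompact [IsProbabilityMeasure lamK] [LocallyCompactSpace G]
    [T2Space G] [BorelSpace G] [lamG.IsHaarMeasure] [BorelSpace (G ⧸ K)] {Ψ : G ⧸ K → ℝ≥0}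
    (hΨ : Continuous Ψ) {S : Set (G ⧸ K)} (hS : IsSigmaCompact S) (hΨS : support Ψ ⊆ S) :
    ∫⁻ g, Ψ (mk g) ∂lamG = ∫⁻ y, Ψ y ∂μ := by
  obtain ⟨η, hη_mono, hη_bound, hη_one⟩ := hS.exists_monotone_eventually_eq_one
  set F : ℕ → G ⧸ K → ℝ := fun n y => Ψ y * η n y
  have hF_cont : ∀ n, Continuous (F n) := fun n =>
    (NNReal.continuous_coe.comp hΨ).mul (η n).continuous
  have hF_supp : ∀ n, HasCompactSupport (F n) := fun n => (η n).hasCompactSupport.mul_left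
  have hF_nonneg : ∀ n, 0 ≤ F n := fun n y => mul_nonneg (Ψ y).coe_nonneg (hη_bound n y).1
  have hF_mono : Monotone fun n y => ENNReal.ofReal (F n y) := fun m n hmn y =>
    ENNReal.ofReal_le_ofReal (mul_le_mul_of_nonneg_left (hη_mono hmn y) (Ψ y).coe_nonneg)
  have hF_sup : ∀ y, ⨆ n, ENNReal.ofReal (F n y) = Ψ y := fun y => by
    refine le_antisymm (iSup_le fun n => ?_) ?_
    · rw [← ENNReal.ofReal_coe_nnreal]
      exact ENNReal.ofReal_le_ofReal (mul_le_of_le_one_right (Ψ y).coe_nonneg (hη_bound n y).2)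
    · by_cases hy : Ψ y = 0
      · simp [hy]
      · obtain ⟨N, hN⟩ := (hη_one y (hΨS hy)).exists
        exact le_iSup_of_le N (by simp [F, hN])
  have hF_meas : ∀ n, Measurable fun y => ENNReal.ofReal (F n y) :=
    fun n => ENNReal.measurable_ofReal.comp (hF_cont n).measurable
  calc ∫⁻ g, Ψ (mk g) ∂lamG = ∫⁻ g, ⨆ n, ENNReal.ofReal (F n (mk g)) ∂lamG := by
        simp only [hF_sup]
    _ = ⨆ n, ∫⁻ g, ENNReal.ofReal (F n (mk g)) ∂lamG :=
      lintegral_iSup (fun n => (hF_meas n).comp continuous_mk.measurable)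
        fun m n hmn g => hF_mono hmn _
    _ = ⨆ n, ∫⁻ y, ENNReal.ofReal (F n y) ∂μ := by
      simp only [hW.lintegral_comp_mk_of_hasCompactSupport (hF_cont _) (hF_supp _) (hF_nonneg _)]
    _ = ∫⁻ y, ⨆ n, ENNReal.ofReal (F n y) ∂μ := (lintegral_iSup hF_meas hF_mono).symm
    _ = ∫⁻ y, Ψ y ∂μ := by simp only [hF_sup]

theorem lintegral_comp_mk [IsProbabilityMeasure lamK] [LocallyCompactSpace G] [T2Space G]
    [BorelSpace G] [lamG.IsHaarMeasure] [BorelSpace (G ⧸ K)] {Ψ : G ⧸ K → ℝ≥0}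
    (hΨ : Continuous Ψ) : ∫⁻ g, Ψ (mk g) ∂lamG = ∫⁻ y, Ψ y ∂μ := by
  by_cases hS : ∃ S, IsSigmaCompact S ∧ support Ψ ⊆ S
  · obtain ⟨S, hS, hΨS⟩ := hS
    exact hW.lintegral_comp_mk_of_isSigmaCompact hΨ hS hΨS
  -- Otherwise `support Ψ` meets uncountably many cosets of `H`, so both integrals are infinite.
  obtain ⟨H, hKH, hHo, hHs⟩ :=
    exists_isOpen_isSigmaCompact_subgroup_superset (isCompact_iff_compactSpace.2 ‹CompactSpace K›)
  have hfib := Subgroup.isOpen_isSigmaCompact_preimage_quotientMapOfLE_singleton hKH hHo hHs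
  have := hW.isOpenPosMeasure
  have hup : ∫⁻ g, Ψ (mk g) ∂lamG = ∞ := by
    by_contra hfin
    obtain ⟨S, hS', hsub⟩ := exists_isSigmaCompact_superset_support_of_lintegral_ne_top
      (fun q => (isOpen_isSigmaCompact_preimage_mk_singleton hHo hHs q).1)
      (fun q => (isOpen_isSigmaCompact_preimage_mk_singleton hHo hHs q).2)
      (ENNReal.continuous_coe.comp (hΨ.comp continuous_mk)) hfin
    refine hS ⟨mk '' S, hS'.image continuous_mk, fun y hy => ?_⟩
    obtain ⟨g, rfl⟩ := mk_surjective y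
    exact mem_image_of_mem _ (hsub (by simpa using hy))
  have hdown : ∫⁻ y, Ψ y ∂μ = ∞ := by
    by_contra hfin
    obtain ⟨S, hS', hsub⟩ := exists_isSigmaCompact_superset_support_of_lintegral_ne_top
      (fun q => (hfib q).1) (fun q => (hfib q).2)
      (ENNReal.continuous_coe.comp hΨ) hfin
    exact hS ⟨S, hS', fun y hy => hsub (by simpa using hy)⟩
  rw [hup, hdown]

theorem integral_comp_mk [IsProbabilityMeasure lamK] [LocallyCompactSpace G] [T2Space G]
    [BorelSpace G] [lamG.IsHaarMeasure] [BorelSpace (G ⧸ K)] {Ψ : G ⧸ K → ℝ}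
    (hΨ : Continuous Ψ) : ∫ g, Ψ (mk g) ∂lamG = ∫ y, Ψ y ∂μ := by
  have hofReal {f : G ⧸ K → ℝ} (hf : Continuous f) :
      ∫⁻ g, ENNReal.ofReal (f (mk g)) ∂lamG = ∫⁻ y, ENNReal.ofReal (f y) ∂μ :=
    hW.lintegral_comp_mk (continuous_real_toNNReal.comp hf)
  have hΨ_mk : AEStronglyMeasurable (fun g => Ψ (mk g)) lamG :=
    (hΨ.comp continuous_mk).aestronglyMeasurable
  have hint : Integrable (fun g => Ψ (mk g)) lamG ↔ Integrable Ψ μ := by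
    simp only [Integrable, hasFiniteIntegral_iff_norm, hofReal hΨ.norm, hΨ.aestronglyMeasurable,
      hΨ_mk]
  by_cases hΨi : Integrable Ψ μ
  · rw [integral_eq_lintegral_pos_part_sub_lintegral_neg_part hΨi,
      integral_eq_lintegral_pos_part_sub_lintegral_neg_part (hint.2 hΨi), hofReal hΨ,
      hofReal (f := fun y => -Ψ y) hΨ.neg]
  · rw [integral_undef hΨi, integral_undef (mt hint.1 hΨi)]

end WeylIntegrationFormula

end Quotient

section Correspondence

variable {G : Type*} [Group G] {K : Subgroup G}

theorem IsGInvariantKernel.apply_mk_mk {Φ : G ⧸ K → G ⧸ K → ℝ} (hΦ : IsGInvariantKernel K Φ)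
    (a b : G) : Φ (mk a) (mk b) = Φ (mk 1) (mk (a⁻¹ * b)) := by
  simpa using hΦ a 1 (a⁻¹ * b)

variable (K) in
/-- `(xK, yK) ↦ φ(x⁻¹y)`, evaluated on chosen coset representatives: the choice does not matter
when `φ` is `K`-bi-invariant (`IsBiInvariantR.kernelOfBiInvariant_mk`). -/
noncomputable def kernelOfBiInvariant (φ : G → ℝ) : G ⧸ K → G ⧸ K → ℝ :=
  fun x y => φ (x.out⁻¹ * y.out)

theorem IsBiInvariantR.kernelOfBiInvariant_mk {φ : G → ℝ} (hφ : IsBiInvariantR K φ) (a b : G) :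
    kernelOfBiInvariant K φ (mk a) (mk b) = φ (a⁻¹ * b) := by
  obtain ⟨k, hk⟩ := mk_out_eq_mul K a
  obtain ⟨k', hk'⟩ := mk_out_eq_mul K b
  rw [kernelOfBiInvariant, hk, hk', ← hφ k⁻¹ k' (a⁻¹ * b)]
  congr 1
  push_cast
  group

variable [TopologicalSpace G] {U V : Set G}

theorem mem_FdelFun_of_mem_FdelKer {Φ : G ⧸ K → G ⧸ K → ℝ} (hΦ : Φ ∈ FdelKer G K U V) :
    (fun g => Φ (mk 1) (mk g)) ∈ FdelFun G K U V := by
  obtain ⟨hc, hpd, hinv, hdiag, hpos, hneg⟩ := hΦ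
  refine ⟨hc.comp (continuous_const.prodMk continuous_mk), fun n c g => ?_, fun k k' g => ?_,
    hdiag 1, hpos, hneg⟩
  · simpa only [← hinv.apply_mk_mk] using hpd n c g
  · have hk : ((1 : G) : G ⧸ K) = ((k : G) : G ⧸ K) := QuotientGroup.eq.2 (by simp)
    show Φ (mk 1) (mk (k * g * k')) = Φ (mk 1) (mk g)
    rw [mk_mul_of_mem _ k'.2, ← hinv k 1 g, mul_one, hk]

theorem kernelOfBiInvariant_mem_FdelKer [IsTopologicalGroup G] {φ : G → ℝ}
    (hφ : φ ∈ FdelFun G K U V) :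
    kernelOfBiInvariant K φ ∈ FdelKer G K U V := by
  obtain ⟨hc, hpd, hbi, hone, hpos, hneg⟩ := hφ
  have hmk := hbi.kernelOfBiInvariant_mk
  have hmk_one (g : G) : kernelOfBiInvariant K φ (mk 1) (mk g) = φ g := by
    rw [hmk, inv_one, one_mul]
  refine ⟨?_, fun n a x => ?_, fun g x y => ?_, fun x => ?_, ?_, ?_⟩
  · rw [← (isOpenQuotientMap_mk.prodMap isOpenQuotientMap_mk).continuous_comp_iff]
    exact (hc.comp (continuous_fst.inv.mul continuous_snd)).congr fun p => (hmk p.1 p.2).symm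
  · simpa only [hmk] using hpd n a x
  · rw [hmk, hmk, mul_inv_rev, mul_assoc, inv_mul_cancel_left]
  · rw [hmk, inv_mul_cancel, hone]
  · simpa only [hmk_one] using hpos
  · simpa only [hmk_one] using hneg

end Correspondence

theorem stmt8_general {G : Type*} [Group G] [TopologicalSpace G] [IsTopologicalGroup G]
    [LocallyCompactSpace G] [T2Space G] [MeasurableSpace G] [BorelSpace G]
    (K : Subgroup G) [CompactSpace K]
    (lamG : Measure G) [lamG.IsHaarMeasure]
    (lamK : Measure K) [IsProbabilityMeasure lamK]
    [MeasurableSpace (G ⧸ K)] [BorelSpace (G ⧸ K)]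
    (μ : Measure (G ⧸ K))
    -- `μ` satisfies the Weyl integration formula
    (hWeyl : ∀ f : G → ℂ, Continuous f → HasCompactSupport f →
      ∀ F : G ⧸ K → ℂ, (∀ g : G, F (QuotientGroup.mk g) = ∫ k : K, f (g * (k : G)) ∂lamK) →
        ∫ g, f g ∂lamG = ∫ x, F x ∂μ)
    (U V : Set G) :
    sSup ((fun Φ : G ⧸ K → G ⧸ K → ℝ =>
        ∫ y, Φ (QuotientGroup.mk (1 : G)) y ∂μ) '' FdelKer G K U V) =
      sSup ((fun φ : G → ℝ => ∫ g, φ g ∂lamG) '' FdelFun G K U V) := by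
  have hW : WeylIntegrationFormula K lamG lamK μ := hWeyl
  have hcont {Φ : G ⧸ K → G ⧸ K → ℝ} (hΦ : Φ ∈ FdelKer G K U V) : Continuous (Φ (mk 1)) :=
    hΦ.1.comp (continuous_const.prodMk continuous_id)
  congr 1
  ext v
  constructor
  · rintro ⟨Φ, hΦ, rfl⟩
    exact ⟨_, mem_FdelFun_of_mem_FdelKer hΦ, hW.integral_comp_mk (hcont hΦ)⟩
  · rintro ⟨φ, hφ, rfl⟩
    have hΦ := kernelOfBiInvariant_mem_FdelKer hφ
    refine ⟨_, hΦ, (hW.integral_comp_mk (hcont hΦ)).symm.trans ?_⟩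
    simp only [hφ.2.2.1.kernelOfBiInvariant_mk, inv_one, one_mul]

theorem stmt8 {G : Type*} [Group G] [TopologicalSpace G] [IsTopologicalGroup G]
    [LocallyCompactSpace G] [T2Space G] [MeasurableSpace G] [BorelSpace G]
    (K : Subgroup G) [CompactSpace K]
    (lamG : Measure G) [lamG.IsHaarMeasure]
    (lamK : Measure K) [lamK.IsHaarMeasure] [IsProbabilityMeasure lamK]
    [MeasurableSpace (G ⧸ K)] [BorelSpace (G ⧸ K)]
    (μ : Measure (G ⧸ K))
    -- `μ` satisfies the Weyl integration formula
    (hWeyl : ∀ f : G → ℂ, Continuous f → HasCompactSupport f →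
      ∀ F : G ⧸ K → ℂ, (∀ g : G, F (QuotientGroup.mk g) = ∫ k : K, f (g * (k : G)) ∂lamK) →
        ∫ g, f g ∂lamG = ∫ x, F x ∂μ)
    (U V : Set G)
    (hU : U ∈ nhds (1 : G)) (hUbi : (K : Set G) * U * (K : Set G) = U) (hUsym : U⁻¹ = U)
    (hVbi : (K : Set G) * V * (K : Set G) = V) (hVsym : V⁻¹ = V) :
    sSup ((fun Φ : G ⧸ K → G ⧸ K → ℝ =>
        ∫ y, Φ (QuotientGroup.mk (1 : G)) y ∂μ) '' FdelKer G K U V) =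
      sSup ((fun φ : G → ℝ => ∫ g, φ g ∂lamG) '' FdelFun G K U V) :=
  stmt8_general K lamG lamK μ hWeyl U V
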